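/- In the parallel execution of ARC and OPT, when ARC serves a request that is a page hit (the page is in T₁ ∪ T₂, so the page is moved to MRU(T₂)), the change in the potential Φ = p − [(b₁'−t) + 2(t₁'−t) + 3(b₂'−t) + 4(t₂'−t)] satisfies: ΔΦ = −2 if the page is in T₁'; ΔΦ = 0 if the page is in T₂'; ΔΦ ≤ −4 if the page is in T₁ − T₁'; and ΔΦ ≤ −4 if the page is in T₂ − T₂'. In particular, ΔΦ ≤ 0 on every ARC hit. -/

import Mathlib

abbrev Page := ℕ

/-- A valid offline demand-paging execution with cache size `N` on request
sequence `σ`, starting from the empty cache. `C i` is the cache just before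
serving request `i` (so `C (i+1)` is the cache just after serving it).
Demand paging: on a hit the cache is unchanged; on a fault only the requested
page may be brought in. -/
def OptExec (N : ℕ) (σ : List Page) (C : ℕ → Finset Page) : Prop :=
  C 0 = ∅ ∧
  (∀ i, (C i).card ≤ N) ∧
  ∀ i, i < σ.length →
    σ.getD i 0 ∈ C (i + 1) ∧
    C (i + 1) ⊆ C i ∪ {σ.getD i 0} ∧
    (σ.getD i 0 ∈ C i → C (i + 1) = C i)

/-- Number of page faults incurred by an offline execution `C` on `σ`. -/
def optFaults (σ : List Page) (C : ℕ → Finset Page) : ℕ :=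
  ((List.range σ.length).filter (fun i => decide (σ.getD i 0 ∉ C i))).length

/-- The fault count of an optimal offline demand-paging algorithm (OPT)
with cache size `N` on `σ`. -/
noncomputable def optCost (N : ℕ) (σ : List Page) : ℕ :=
  sInf {k | ∃ C, OptExec N σ C ∧ optFaults σ C = k}

/-- The state of the ARC cache: main lists `T1`, `T2` and history lists
`B1`, `B2` (each kept in recency order, MRU at the head, LRU at the end),
together with the adaptive parameter `p`. -/
structure ArcState where
  T1 : List Page
  T2 : List Page
  B1 : List Page
  B2 : List Page
  p  : ℕ

/-- ARC starts with empty lists and `p = 0`. -/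
def ArcState.init : ArcState := ⟨[], [], [], [], 0⟩

/-- ARC's subroutine REPLACE: demote `LRU(T1)` to the MRU position of `B1`
if `|T1| ≥ 1` and either (the requested page was in `B2` and `|T1| = p`) or
`|T1| > p`; otherwise demote `LRU(T2)` to the MRU position of `B2`. -/
def arcReplace (xInB2 : Bool) (s : ArcState) : ArcState :=
  if 1 ≤ s.T1.length ∧ ((xInB2 = true ∧ s.T1.length = s.p) ∨ s.p < s.T1.length) then
    { s with T1 := s.T1.dropLast, B1 := s.T1.getLast?.toList ++ s.B1 }
  else
    { s with T2 := s.T2.dropLast, B2 := s.T2.getLast?.toList ++ s.B2 }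

/-- One step of ARC (cache size `N`, with the ±1 adaptation rule) on a
requested page `x`. -/
def arcStep (N : ℕ) (s : ArcState) (x : Page) : ArcState :=
  if x ∈ s.T1 ∨ x ∈ s.T2 then
    -- cache hit: move `x` to the MRU position of `T2`
    { s with T1 := s.T1.erase x, T2 := x :: s.T2.erase x }
  else if x ∈ s.B1 then
    -- history hit in B1: adapt `p := min (p+1) N`, REPLACE, move `x` to MRU(T2)
    let s2 := arcReplace false { s with p := min (s.p + 1) N }
    { s2 with B1 := s2.B1.erase x, T2 := x :: s2.T2 }
  else if x ∈ s.B2 then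
    -- history hit in B2: adapt `p := max (p-1) 0`, REPLACE, move `x` to MRU(T2)
    let s2 := arcReplace true { s with p := s.p - 1 }
    { s2 with B2 := s2.B2.erase x, T2 := x :: s2.T2 }
  else
    -- cache and directory miss
    let s2 :=
      if s.T1.length + s.B1.length = N then
        if s.T1.length < N then
          arcReplace false { s with B1 := s.B1.dropLast }
        else
          { s with T1 := s.T1.dropLast }
      else if s.T1.length + s.B1.length < N ∧
          N ≤ s.T1.length + s.T2.length + s.B1.length + s.B2.length then
        arcReplace false
          (if s.T1.length + s.T2.length + s.B1.length + s.B2.length = 2 * N then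
            { s with B2 := s.B2.dropLast }
          else s)
      else s
    { s2 with T1 := x :: s2.T1 }

/-- Run ARC on a request sequence. -/
def arcRun (N : ℕ) : ArcState → List Page → ArcState
  | s, [] => s
  | s, x :: xs => arcRun N (arcStep N s x) xs

/-- Number of page faults incurred by ARC on a request sequence. -/
def arcCost (N : ℕ) : ArcState → List Page → ℕ
  | _, [] => 0
  | s, x :: xs => (if x ∈ s.T1 ∨ x ∈ s.T2 then 0 else 1) + arcCost N (arcStep N s x) xs

/-- `t = t₁ + t₂`, the number of pages in ARC's cache. -/
def arcT (s : ArcState) : ℕ := s.T1.length + s.T2.length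

/-- `TOP(X)` for a recency-ordered list `X`: the longest prefix (i.e. the
largest set of most-recently-used pages) of `X` all of whose pages are in
OPT's cache `O`; `topLen` is its size. -/
def topLen (X : List Page) (O : Finset Page) : ℕ :=
  (X.takeWhile (fun q => decide (q ∈ O))).length

/-- `t₁' = |TOP(T1)|`. -/
def arcT1' (s : ArcState) (O : Finset Page) : ℕ := topLen s.T1 O

/-- `t₂' = |TOP(T2)|`. -/
def arcT2' (s : ArcState) (O : Finset Page) : ℕ := topLen s.T2 O

/-- `b₁' = |TOP(L1) ∩ B1|` where `L1 = T1 · B1`. -/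
def arcB1' (s : ArcState) (O : Finset Page) : ℕ :=
  (((s.T1 ++ s.B1).takeWhile (fun q => decide (q ∈ O))).filter
    (fun q => decide (q ∈ s.B1))).length

/-- `b₂' = |TOP(L2) ∩ B2|` where `L2 = T2 · B2`. -/
def arcB2' (s : ArcState) (O : Finset Page) : ℕ :=
  (((s.T2 ++ s.B2).takeWhile (fun q => decide (q ∈ O))).filter
    (fun q => decide (q ∈ s.B2))).length

/-- The potential `Φ = p − [(b₁'−t) + 2(t₁'−t) + 3(b₂'−t) + 4(t₂'−t)]`
with the value `t` supplied explicitly. -/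
def arcPhiAt (s : ArcState) (O : Finset Page) (t : ℤ) : ℤ :=
  (s.p : ℤ) - (((arcB1' s O : ℤ) - t) + 2 * ((arcT1' s O : ℤ) - t)
    + 3 * ((arcB2' s O : ℤ) - t) + 4 * ((arcT2' s O : ℤ) - t))

/-- The potential `Φ = p − [(b₁'−t) + 2(t₁'−t) + 3(b₂'−t) + 4(t₂'−t)]`. -/
def arcPhi (s : ArcState) (O : Finset Page) : ℤ :=
  arcPhiAt s O (arcT s)

/-- ARC's cache directory: all pages it tracks. -/
def arcDir (s : ArcState) : List Page := s.T1 ++ s.T2 ++ s.B1 ++ s.B2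

/-! On a hit on `x`, the page is in OPT's cache, `p` and `t` do not change, and, since ARC's
directory never holds a page twice (an invariant of every run), `x` lies in neither history list.
Moving `x` to the front of `T2` therefore leaves `b₁'` and `b₂'` unchanged: within `TOP(L)` the
page only changes place, or `TOP(L)` ends before `x` both before and after the move. Likewise
`t₁'` drops by one iff `x ∈ T1'`, and `t₂'` grows by one unless `x ∈ T2'` already, so
`ΔΦ = 2·[x ∈ T1'] − 4·[x ∉ T2']`. -/

namespace List

theorem Nodup.of_subperm {α : Type*} {l₁ l₂ : List α} (hl : l₂.Nodup)
    (h : l₁.Subperm l₂) : l₁.Nodup := by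
  obtain ⟨l, hperm, hsub⟩ := h
  exact hperm.nodup_iff.1 (hl.sublist hsub)

theorem dropLast_append_getLast?_toList {α : Type*} (l : List α) :
    l.dropLast ++ l.getLast?.toList = l := by
  rw [dropLast_eq_take, take_append_getLast?]

variable {α : Type*} [BEq α] [LawfulBEq α] {p q : α → Bool} {x : α}

theorem takeWhile_append_perm_cons_erase {l : List α} (hx : x ∈ l.takeWhile p) (L : List α) :
    ((l ++ L).takeWhile p).Perm (x :: (l.erase x ++ L).takeWhile p) := by
  induction l with
  | nil => simp at hx
  | cons a l ih =>
    have hpa : p a = true := by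
      by_contra h
      simp [takeWhile_cons_of_neg h] at hx
    rw [takeWhile_cons_of_pos hpa] at hx
    rw [cons_append, takeWhile_cons_of_pos hpa]
    by_cases hax : a = x
    · subst hax
      simp
    · rw [erase_cons_tail (by simpa using hax), cons_append, takeWhile_cons_of_pos hpa]
      have hx' : x ∈ l.takeWhile p := by simpa [Ne.symm hax] using hx
      exact ((ih hx').cons a).trans (Perm.swap x a _)

theorem takeWhile_erase_append {l : List α} (hpx : p x = true) (hx : x ∉ l.takeWhile p)
    (L : List α) : (l.erase x ++ L).takeWhile p = (l ++ L).takeWhile p := by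
  induction l with
  | nil => rfl
  | cons a l ih =>
    by_cases hpa : p a = true
    · have hax : a ≠ x := by
        rintro rfl
        simp [takeWhile_cons_of_pos hpa] at hx
      rw [takeWhile_cons_of_pos hpa, mem_cons, not_or] at hx
      rw [erase_cons_tail (by simpa using hax), cons_append, cons_append,
        takeWhile_cons_of_pos hpa, takeWhile_cons_of_pos hpa, ih hx.2]
    · have hax : a ≠ x := by
        rintro rfl
        exact hpa hpx
      rw [erase_cons_tail (by simpa using hax), cons_append, cons_append,
        takeWhile_cons_of_neg hpa, takeWhile_cons_of_neg hpa]

theorem countP_takeWhile_erase_append (l L : List α) (hpx : p x = true) (hqx : q x = false) :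
    ((l.erase x ++ L).takeWhile p).countP q = ((l ++ L).takeWhile p).countP q := by
  by_cases hx : x ∈ l.takeWhile p
  · rw [(takeWhile_append_perm_cons_erase hx L).countP_eq, countP_cons_of_neg (by simp [hqx])]
  · rw [takeWhile_erase_append hpx hx]

end List

def arcHit (s : ArcState) (x : Page) : ArcState :=
  { s with T1 := s.T1.erase x, T2 := x :: s.T2.erase x }

theorem arcStep_of_mem {N : ℕ} {s : ArcState} {x : Page} (hx : x ∈ s.T1 ∨ x ∈ s.T2) :
    arcStep N s x = arcHit s x := by
  rw [arcStep, if_pos hx, arcHit]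

section Directory

variable {s : ArcState} {x : Page}

theorem arcDir_arcReplace_perm (b : Bool) (s : ArcState) :
    (arcDir (arcReplace b s)).Perm (arcDir s) := by
  unfold arcReplace arcDir
  rw [List.perm_iff_count]
  intro a
  split_ifs
  · conv_rhs => rw [← s.T1.dropLast_append_getLast?_toList]
    simp only [List.count_append]
    omega
  · conv_rhs => rw [← s.T2.dropLast_append_getLast?_toList]
    simp only [List.count_append]
    omega

theorem B1_subset_arcReplace (b : Bool) (s : ArcState) : s.B1 ⊆ (arcReplace b s).B1 := by
  unfold arcReplace
  split_ifs <;> simp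

theorem B2_subset_arcReplace (b : Bool) (s : ArcState) : s.B2 ⊆ (arcReplace b s).B2 := by
  unfold arcReplace
  split_ifs <;> simp

theorem arcDir_dropLastB1_sublist : (arcDir {s with B1 := s.B1.dropLast}).Sublist (arcDir s) := by
  simp [arcDir, List.dropLast_sublist]

theorem arcDir_dropLastT1_sublist : (arcDir {s with T1 := s.T1.dropLast}).Sublist (arcDir s) := by
  simp [arcDir, List.dropLast_sublist]

theorem arcDir_dropLastB2_sublist : (arcDir {s with B2 := s.B2.dropLast}).Sublist (arcDir s) := by
  simp [arcDir, List.dropLast_sublist]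

theorem disjoint_T1_T2_of_nodup_arcDir (hnd : (arcDir s).Nodup) : s.T1.Disjoint s.T2 := by
  simp only [arcDir, List.nodup_append, List.mem_append] at hnd
  exact fun a h1 h2 => by grind

theorem notMem_B1_B2_of_nodup_arcDir (hnd : (arcDir s).Nodup) (hx : x ∈ s.T1 ∨ x ∈ s.T2) :
    x ∉ s.B1 ∧ x ∉ s.B2 := by
  simp only [arcDir, List.nodup_append, List.mem_append] at hnd
  constructor <;> intro hB <;> grind

theorem arcDir_arcHit_perm (hnd : (arcDir s).Nodup) (hx : x ∈ s.T1 ∨ x ∈ s.T2) :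
    (arcDir (arcHit s x)).Perm (arcDir s) := by
  have hdisj := disjoint_T1_T2_of_nodup_arcDir hnd
  rw [List.perm_iff_count]
  intro a
  simp only [arcDir, arcHit, List.count_append, List.count_cons, List.count_erase, beq_iff_eq]
  rcases hx with hx | hx
  · have h1 := List.count_pos_iff.2 hx
    have h2 := List.count_eq_zero.2 (hdisj hx)
    split_ifs <;> subst_vars <;> omega
  · have h1 := List.count_pos_iff.2 hx
    have h2 := List.count_eq_zero.2 (fun h => hdisj h hx)
    split_ifs <;> subst_vars <;> omega

theorem arcDir_promoteFromB1_perm (hx : x ∈ s.B1) :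
    (arcDir { s with B1 := s.B1.erase x, T2 := x :: s.T2 }).Perm (arcDir s) := by
  rw [List.perm_iff_count]
  intro a
  have h1 := List.count_pos_iff.2 hx
  simp only [arcDir, List.count_append, List.count_cons, List.count_erase, beq_iff_eq]
  split_ifs <;> subst_vars <;> omega

theorem arcDir_promoteFromB2_perm (hx : x ∈ s.B2) :
    (arcDir { s with B2 := s.B2.erase x, T2 := x :: s.T2 }).Perm (arcDir s) := by
  rw [List.perm_iff_count]
  intro a
  have h1 := List.count_pos_iff.2 hx
  simp only [arcDir, List.count_append, List.count_cons, List.count_erase, beq_iff_eq]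
  split_ifs <;> subst_vars <;> omega

theorem nodup_arcDir_cons_T1 {s₀ : ArcState} (hsub : (arcDir s).Subperm (arcDir s₀))
    (hnd : (arcDir s₀).Nodup) (hx : x ∉ arcDir s₀) :
    (arcDir { s with T1 := x :: s.T1 }).Nodup := by
  have : arcDir { s with T1 := x :: s.T1 } = x :: arcDir s := rfl
  rw [this, List.nodup_cons]
  exact ⟨fun h => hx (hsub.subset h), hnd.of_subperm hsub⟩

theorem nodup_arcDir_arcStep (N : ℕ) (hnd : (arcDir s).Nodup) :
    (arcDir (arcStep N s x)).Nodup := by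
  unfold arcStep
  split_ifs with hT hB1 hB2
  · exact (arcDir_arcHit_perm hnd hT).nodup_iff.2 hnd
  · have hB1' := B1_subset_arcReplace false { s with p := min (s.p + 1) N } hB1
    exact (arcDir_promoteFromB1_perm hB1').nodup_iff.2
      ((arcDir_arcReplace_perm _ _).nodup_iff.2 hnd)
  · have hB2' := B2_subset_arcReplace true { s with p := s.p - 1 } hB2
    exact (arcDir_promoteFromB2_perm hB2').nodup_iff.2
      ((arcDir_arcReplace_perm _ _).nodup_iff.2 hnd)
  all_goals
    have hx : x ∉ arcDir s := by simp only [arcDir, List.mem_append]; tauto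
    refine nodup_arcDir_cons_T1 ?_ hnd hx
  · exact (arcDir_arcReplace_perm _ _).subperm.trans arcDir_dropLastB1_sublist.subperm
  · exact arcDir_dropLastT1_sublist.subperm
  · exact (arcDir_arcReplace_perm _ _).subperm.trans arcDir_dropLastB2_sublist.subperm
  · exact (arcDir_arcReplace_perm _ _).subperm
  · exact List.Subperm.refl _

theorem nodup_arcDir_arcRun (N : ℕ) (l : List Page) (hnd : (arcDir s).Nodup) :
    (arcDir (arcRun N s l)).Nodup := by
  induction l generalizing s with
  | nil => exact hnd
  | cons x l ih => exact ih (nodup_arcDir_arcStep N hnd)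

end Directory

section Potential

variable {O : Finset Page} {X : List Page} {s : ArcState} {x : Page}

theorem topLen_erase_add_one (hx : x ∈ X.takeWhile (fun q => decide (q ∈ O))) :
    topLen (X.erase x) O + 1 = topLen X O := by
  simpa [topLen] using (List.takeWhile_append_perm_cons_erase hx []).length_eq.symm

theorem topLen_erase (hxO : x ∈ O) (hx : x ∉ X.takeWhile (fun q => decide (q ∈ O))) :
    topLen (X.erase x) O = topLen X O := by
  simpa [topLen] using congrArg List.length (List.takeWhile_erase_append (by simpa using hxO) hx [])

theorem topLen_cons (hxO : x ∈ O) : topLen (x :: X) O = topLen X O + 1 := by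
  simp [topLen, hxO]

theorem arcT_arcHit (hx : x ∈ s.T1 ∨ x ∈ s.T2) (hdisj : s.T1.Disjoint s.T2) :
    arcT (arcHit s x) = arcT s := by
  have h12 : x ∈ s.T1 → x ∉ s.T2 := fun h => hdisj h
  simp only [arcT, arcHit, List.length_cons, List.length_erase]
  rcases hx with hx | hx <;> have := List.length_pos_of_mem hx <;> split_ifs <;> grind

theorem arcT1'_arcHit (hxO : x ∈ O) :
    arcT1' (arcHit s x) O + (if x ∈ s.T1.takeWhile (fun q => decide (q ∈ O)) then 1 else 0) =
      arcT1' s O := by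
  unfold arcT1' arcHit
  split_ifs with h
  · exact topLen_erase_add_one h
  · simpa using topLen_erase hxO h

theorem arcT2'_arcHit (hxO : x ∈ O) :
    arcT2' (arcHit s x) O =
      arcT2' s O + (if x ∈ s.T2.takeWhile (fun q => decide (q ∈ O)) then 0 else 1) := by
  unfold arcT2' arcHit
  rw [topLen_cons hxO]
  split_ifs with h
  · exact topLen_erase_add_one h
  · rw [topLen_erase hxO h]

theorem arcB1'_arcHit (hxO : x ∈ O) (hxB : x ∉ s.B1) : arcB1' (arcHit s x) O = arcB1' s O := by
  simp only [arcB1', arcHit, ← List.countP_eq_length_filter]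
  exact List.countP_takeWhile_erase_append _ _ (decide_eq_true hxO) (decide_eq_false hxB)

theorem arcB2'_arcHit (hxO : x ∈ O) (hxB : x ∉ s.B2) : arcB2' (arcHit s x) O = arcB2' s O := by
  simp only [arcB2', arcHit, ← List.countP_eq_length_filter, List.cons_append]
  rw [List.takeWhile_cons_of_pos (p := fun q => decide (q ∈ O)) (decide_eq_true hxO),
    List.countP_cons_of_neg (by simp [hxB])]
  exact List.countP_takeWhile_erase_append _ _ (decide_eq_true hxO) (decide_eq_false hxB)

theorem arcPhi_arcHit_sub (hnd : (arcDir s).Nodup) (hxO : x ∈ O)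
    (hx : x ∈ s.T1 ∨ x ∈ s.T2) :
    arcPhi (arcHit s x) O - arcPhi s O =
      (if x ∈ s.T1.takeWhile (fun q => decide (q ∈ O)) then 2 else 0) -
        (if x ∈ s.T2.takeWhile (fun q => decide (q ∈ O)) then 0 else 4) := by
  obtain ⟨hB1, hB2⟩ := notMem_B1_B2_of_nodup_arcDir hnd hx
  have ht1 := arcT1'_arcHit (s := s) hxO
  have ht2 := arcT2'_arcHit (s := s) hxO
  have hp : (arcHit s x).p = s.p := rfl
  simp only [arcPhi, arcPhiAt, hp, arcT_arcHit hx (disjoint_T1_T2_of_nodup_arcDir hnd),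
    arcB1'_arcHit hxO hB1, arcB2'_arcHit hxO hB2]
  split_ifs at ht1 ht2 ⊢ <;> omega

end Potential

theorem arc_hit_potential_general (N : ℕ) (σ : List Page) (C : ℕ → Finset Page)
    (hC : OptExec N σ C)
    (j : ℕ) (hj : j < σ.length)
    (s : ArcState) (hs : s = arcRun N ArcState.init (σ.take j))
    (hhit : σ.getD j 0 ∈ s.T1 ∨ σ.getD j 0 ∈ s.T2) :
    (σ.getD j 0 ∈ s.T1.takeWhile (fun r => decide (r ∈ C (j + 1))) →
      arcPhi (arcStep N s (σ.getD j 0)) (C (j + 1)) - arcPhi s (C (j + 1)) = -2) ∧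
    (σ.getD j 0 ∈ s.T2.takeWhile (fun r => decide (r ∈ C (j + 1))) →
      arcPhi (arcStep N s (σ.getD j 0)) (C (j + 1)) - arcPhi s (C (j + 1)) = 0) ∧
    (σ.getD j 0 ∈ s.T1 ∧
        σ.getD j 0 ∉ s.T1.takeWhile (fun r => decide (r ∈ C (j + 1))) →
      arcPhi (arcStep N s (σ.getD j 0)) (C (j + 1)) - arcPhi s (C (j + 1)) ≤ -4) ∧
    (σ.getD j 0 ∈ s.T2 ∧
        σ.getD j 0 ∉ s.T2.takeWhile (fun r => decide (r ∈ C (j + 1))) →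
      arcPhi (arcStep N s (σ.getD j 0)) (C (j + 1)) - arcPhi s (C (j + 1)) ≤ -4) ∧
    arcPhi (arcStep N s (σ.getD j 0)) (C (j + 1)) - arcPhi s (C (j + 1)) ≤ 0 := by
  set x := σ.getD j 0
  have hxO : x ∈ C (j + 1) := (hC.2.2 j hj).1
  have hnd : (arcDir s).Nodup :=
    hs ▸ nodup_arcDir_arcRun N _ (by simp [arcDir, ArcState.init])
  have hdisj : x ∈ s.T1 → x ∉ s.T2 := fun h => disjoint_T1_T2_of_nodup_arcDir hnd h
  have hT1 := List.takeWhile_subset (l := s.T1) (fun r => decide (r ∈ C (j + 1))) (a := x)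
  have hT2 := List.takeWhile_subset (l := s.T2) (fun r => decide (r ∈ C (j + 1))) (a := x)
  rw [arcStep_of_mem hhit, arcPhi_arcHit_sub hnd hxO hhit]
  refine ⟨fun h => ?_, fun h => ?_, fun h => ?_, fun h => ?_, ?_⟩ <;> split_ifs <;> grind

/-- Case I. In the parallel execution of ARC and OPT, when
ARC serves a request `σ_j` that is a page hit (the page is in `T1 ∪ T2` and is
moved to `MRU(T2)`), the change of the potential
`Φ = p − [(b₁'−t) + 2(t₁'−t) + 3(b₂'−t) + 4(t₂'−t)]` (w.r.t. OPT's cache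
`C (j+1)`) satisfies: `ΔΦ = −2` if the page is in `T1'`; `ΔΦ = 0` if it is in
`T2'`; `ΔΦ ≤ −4` if it is in `T1 − T1'`; `ΔΦ ≤ −4` if it is in `T2 − T2'`;
in particular `ΔΦ ≤ 0` on every ARC hit. -/
theorem arc_hit_potential (N : ℕ) (σ : List Page) (C : ℕ → Finset Page)
    (hC : OptExec N σ C) (hCopt : optFaults σ C = optCost N σ)
    (j : ℕ) (hj : j < σ.length)
    (s : ArcState) (hs : s = arcRun N ArcState.init (σ.take j))
    (hhit : σ.getD j 0 ∈ s.T1 ∨ σ.getD j 0 ∈ s.T2) :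
    (σ.getD j 0 ∈ s.T1.takeWhile (fun r => decide (r ∈ C (j + 1))) →
      arcPhi (arcStep N s (σ.getD j 0)) (C (j + 1)) - arcPhi s (C (j + 1)) = -2) ∧
    (σ.getD j 0 ∈ s.T2.takeWhile (fun r => decide (r ∈ C (j + 1))) →
      arcPhi (arcStep N s (σ.getD j 0)) (C (j + 1)) - arcPhi s (C (j + 1)) = 0) ∧
    (σ.getD j 0 ∈ s.T1 ∧
        σ.getD j 0 ∉ s.T1.takeWhile (fun r => decide (r ∈ C (j + 1))) →
      arcPhi (arcStep N s (σ.getD j 0)) (C (j + 1)) - arcPhi s (C (j + 1)) ≤ -4) ∧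
    (σ.getD j 0 ∈ s.T2 ∧
        σ.getD j 0 ∉ s.T2.takeWhile (fun r => decide (r ∈ C (j + 1))) →
      arcPhi (arcStep N s (σ.getD j 0)) (C (j + 1)) - arcPhi s (C (j + 1)) ≤ -4) ∧
    arcPhi (arcStep N s (σ.getD j 0)) (C (j + 1)) - arcPhi s (C (j + 1)) ≤ 0 :=
  arc_hit_potential_general N σ C hC j hj s hs hhit
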